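/- Let (x_n, y_n, z_n, v_n) be the orbit of the level-3 local structure map L for rule 14 started at (x_0, y_0, z_0, v_0) = (1/2, 1/4, 1/8, 1/8). Then (y_1, z_1) = (3/8, 7/32), and for every n ≥ 1 one has y_{n+1} = 1/2 − y_n + z_n and z_{n+1} = z_n − (4y_n − 1)(y_n − z_n)z_n/y_n; that is, the pair (y_n, z_n) evolves for n ≥ 1 under the reduced map F(y, z) = (1/2 − y + z, z − (4y − 1)(y − z)z/y). -/

import Mathlib

open Filter

/-- Level-3 local structure map for rule 14.  In Lean, division by zero
yields zero, which matches the convention that the fraction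
`v(y-z)z/(y(x-y))` is taken to be `0` whenever `y(x-y) = 0`. -/
noncomputable def L (p : ℝ × ℝ × ℝ × ℝ) : ℝ × ℝ × ℝ × ℝ :=
  match p with
  | (x, y, z, v) =>
    (-x + z + 1,
     -2 * x + y + z + 1,
     1 + z + v - 3 * x + 2 * y - v * (y - z) * z / (y * (x - y)),
     x - 2 * y + z)

/-- Reduced two-dimensional local structure map for rule 14.  In Lean,
division by zero yields zero, matching the convention that the fraction
`(4y-1)(y-z)z/y` is taken to be `0` whenever `y = 0`. -/
noncomputable def F (p : ℝ × ℝ) : ℝ × ℝ :=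
  (1/2 - p.1 + p.2, p.2 - (4 * p.1 - 1) * (p.1 - p.2) * p.2 / p.1)

/-! On the slice `x = y + 1/4`, `v = y - 1/4` the fraction in `L` becomes
`(y - 1/4)(y - z)z / (y/4) = (4y - 1)(y - z)z / y`, so `L` acts on `(y, z)` as `F`.
The slice is `L`-invariant, and the orbit enters it after one step:
`L (1/2, 1/4, 1/8, 1/8) = (5/8, 3/8, 7/32, 1/8)`. -/

def reducedSlice : Set (ℝ × ℝ × ℝ × ℝ) :=
  {p | p.1 = p.2.1 + 1/4 ∧ p.2.2.2 = p.2.1 - 1/4}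

theorem mapsTo_L_reducedSlice : Set.MapsTo L reducedSlice reducedSlice := by
  rintro ⟨x, y, z, v⟩ ⟨hx, hv⟩
  simp only at hx hv
  subst hx hv
  constructor <;> simp only [L] <;> ring

theorem L_yz_eq_F_of_mem_reducedSlice {p : ℝ × ℝ × ℝ × ℝ} (hp : p ∈ reducedSlice) :
    ((L p).2.1, (L p).2.2.1) = F (p.2.1, p.2.2.1) := by
  obtain ⟨x, y, z, v⟩ := p
  obtain ⟨hx, hv⟩ := hp
  simp only at hx hv
  subst hx hv
  simp only [L, F, Prod.mk.injEq]
  constructor <;> ring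

theorem L_initial : L (1/2, 1/4, 1/8, 1/8) = (5/8, 3/8, 7/32, 1/8) := by
  norm_num [L]

theorem iterate_L_initial_mem_reducedSlice {n : ℕ} (hn : 1 ≤ n) :
    L^[n] (1/2, 1/4, 1/8, 1/8) ∈ reducedSlice := by
  obtain ⟨k, rfl⟩ := Nat.exists_eq_add_of_le' hn
  rw [Function.iterate_succ_apply, L_initial]
  exact mapsTo_L_reducedSlice.iterate k (by norm_num [reducedSlice])

theorem local_structure_reduces_to_F :
    ((L^[1] (1/2, 1/4, 1/8, 1/8)).2.1 = 3/8 ∧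
     (L^[1] (1/2, 1/4, 1/8, 1/8)).2.2.1 = 7/32) ∧
    (∀ n : ℕ, 1 ≤ n →
      ((L^[n+1] (1/2, 1/4, 1/8, 1/8)).2.1,
       (L^[n+1] (1/2, 1/4, 1/8, 1/8)).2.2.1)
        = F ((L^[n] (1/2, 1/4, 1/8, 1/8)).2.1,
             (L^[n] (1/2, 1/4, 1/8, 1/8)).2.2.1)) := by
  refine ⟨by rw [Function.iterate_one, L_initial]; exact ⟨rfl, rfl⟩, fun n hn => ?_⟩
  rw [Function.iterate_succ_apply']
  exact L_yz_eq_F_of_mem_reducedSlice (iterate_L_initial_mem_reducedSlice hn)
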